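/- arXiv:2401.03278 — 2 statements merged into one kernel-verified Lean document; each statement's English description precedes it below -/
import Mathlib

section
/- For every planar rooted tree $t$ with at least one edge, every modulus $q \geq 1$, and every $a$ coprime to $q$, there exist infinitely many positive integers $n$ with $n \equiv a \pmod q$ and $t(n) = t$. -/
/-- Planar rooted trees: a tree is a root with an ordered list of subtrees. -/
inductive PTree : Type
  | node : List PTree → PTree

private lemma factorization_lt {n p : ℕ} (hp : p ∈ n.primeFactors) :
    n.factorization p < n := by
  obtain ⟨hprime, hdvd, hn⟩ := Nat.mem_primeFactors.mp hp
  calc n.factorization p < 2 ^ n.factorization p := (by first | exact Nat.lt_two_pow_self | exact Nat.lt_two_pow_self _)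
    _ ≤ p ^ n.factorization p := Nat.pow_le_pow_left hprime.two_le _
    _ ≤ n := Nat.le_of_dvd (Nat.pos_of_ne_zero hn) (Nat.ordProj_dvd n p)

/-- The planar rooted tree `t(n)` of the prime tower factorization of `n`:
the root has one child for each prime factor `p` of `n` (in increasing order),
the corresponding subtree being the tree of the exponent `ν_p(n)`. -/
def primeTower (n : ℕ) : PTree :=
  PTree.node (((n.primeFactors.sort (· ≤ ·)).attach).map
    (fun p => primeTower (n.factorization p.1)))
decreasing_by
  exact factorization_lt ((Finset.mem_sort _).mp p.2)

/-! Write `t = node (t₁ :: ts)`. Realize `t₁` recursively by an exponent `e ≡ 1 (mod φ q)`, pick a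
Dirichlet prime `p ≡ a (mod q)`, and realize `ts` by a number `m ≡ 1 (mod q)` built from primes
`≡ 1 (mod q)` larger than `p`, again with recursively realized exponents. Then `n = p ^ e * m`
has `p` as its smallest prime factor, so `t(n) = t`, and `n ≡ p ^ e ≡ p ≡ a (mod q)` by
Euler's theorem. -/

def primeTowerChildren (n : ℕ) : List PTree :=
  (n.primeFactors.sort (· ≤ ·)).map fun p => primeTower (n.factorization p)

theorem primeTower_eq_node (n : ℕ) : primeTower n = .node (primeTowerChildren n) := by
  rw [primeTower, primeTowerChildren]
  exact congrArg PTree.node (List.attach_map_val (f := fun p => primeTower (n.factorization p)))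

theorem primeTower_one : primeTower 1 = .node [] := by
  rw [primeTower_eq_node]
  simp [primeTowerChildren]

theorem primeTowerChildren_prime_pow_mul {p e m : ℕ} (hp : p.Prime) (he : e ≠ 0) (hm : m ≠ 0)
    (hlt : ∀ r ∈ m.primeFactors, p < r) :
    primeTowerChildren (p ^ e * m) = primeTower e :: primeTowerChildren m := by
  have hpm : p ∉ m.primeFactors := fun h => (hlt p h).false
  have hcop : (p ^ e).Coprime m :=
    Nat.Coprime.pow_left _ <| (Nat.Prime.coprime_iff_not_dvd hp).2 fun h =>
      hpm (Nat.mem_primeFactors.2 ⟨hp, h, hm⟩)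
  have hsort : (p ^ e * m).primeFactors.sort (· ≤ ·) = p :: m.primeFactors.sort (· ≤ ·) := by
    rw [hcop.primeFactors_mul, Nat.primeFactors_prime_pow he hp, ← Finset.insert_eq]
    exact Finset.sort_insert _ (fun r hr => (hlt r hr).le) hpm
  have hfact (r : ℕ) : (p ^ e * m).factorization r = Finsupp.single p e r + m.factorization r := by
    rw [Nat.factorization_mul_of_coprime hcop, hp.factorization_pow, Finsupp.add_apply]
  rw [primeTowerChildren, hsort, List.map_cons, hfact, Finsupp.single_eq_same,
    Finsupp.notMem_support_iff.1 (by rwa [Nat.support_factorization]), add_zero]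
  refine congrArg _ (List.map_congr_left fun r hr => ?_)
  have hrp : r ≠ p := (hlt r ((Finset.mem_sort _).1 hr)).ne'
  rw [hfact, Finsupp.single_eq_of_ne hrp, zero_add]

theorem Nat.pow_modEq_self_of_modEq_one_totient {x q e : ℕ} (hx : x.Coprime q)
    (he0 : e ≠ 0) (he : e ≡ 1 [MOD q.totient]) : x ^ e ≡ x [MOD q] := by
  obtain ⟨k, hk⟩ := (Nat.modEq_iff_dvd' (Nat.one_le_iff_ne_zero.2 he0)).1 he.symm
  calc x ^ e = (x ^ q.totient) ^ k * x := by
        rw [← pow_mul, ← pow_succ, ← hk, Nat.sub_add_cancel (Nat.one_le_iff_ne_zero.2 he0)]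
    _ ≡ 1 ^ k * x [MOD q] := ((Nat.ModEq.pow_totient hx).pow k).mul_right x
    _ = x := by rw [one_pow, one_mul]

theorem exists_primeTowerChildren_eq {q : ℕ} (hq : q ≠ 0) (l : List PTree)
    (hl : ∀ t ∈ l, ∃ e ≠ 0, primeTower e = t) (B : ℕ) :
    ∃ m ≠ 0, m ≡ 1 [MOD q] ∧ (∀ r ∈ m.primeFactors, B < r) ∧ primeTowerChildren m = l := by
  induction l generalizing B with
  | nil => exact ⟨1, one_ne_zero, rfl, by simp, by simp [primeTowerChildren]⟩
  | cons t ts ih =>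
    obtain ⟨e, he, rfl⟩ := hl t List.mem_cons_self
    obtain ⟨p, hpB, hp, hp1⟩ := Nat.forall_exists_prime_gt_and_modEq B hq (Nat.coprime_one_left q)
    obtain ⟨m, hm, hm1, hmp, rfl⟩ := ih (fun t ht => hl t (List.mem_cons_of_mem _ ht)) p
    have hpe : p ^ e ≠ 0 := pow_ne_zero _ hp.ne_zero
    refine ⟨p ^ e * m, mul_ne_zero hpe hm, by simpa using (hp1.pow e).mul hm1, ?_,
      primeTowerChildren_prime_pow_mul hp he hm hmp⟩
    intro r hr
    rw [Nat.primeFactors_mul hpe hm, Nat.primeFactors_prime_pow he hp, Finset.mem_union,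
      Finset.mem_singleton] at hr
    rcases hr with rfl | hr
    exacts [hpB, hpB.trans (hmp r hr)]

theorem exists_gt_modEq_primeTower_eq : ∀ (t : PTree), t ≠ .node [] → ∀ {q a : ℕ}, q ≠ 0 →
    a.Coprime q → ∀ N, ∃ n, N < n ∧ n ≡ a [MOD q] ∧ primeTower n = t
  | .node [], ht, _, _, _, _, _ => absurd rfl ht
  | .node (t :: ts), _, q, a, hq, ha, N => by
    have realize : ∀ s ∈ t :: ts, ∀ {q'}, q' ≠ 0 → ∃ e ≠ 0, e ≡ 1 [MOD q'] ∧ primeTower e = s := by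
      intro s hs q' hq'
      by_cases h : s = .node []
      · exact ⟨1, one_ne_zero, rfl, h ▸ primeTower_one⟩
      · obtain ⟨e, he, hmod, hs⟩ :=
          exists_gt_modEq_primeTower_eq s h hq' (Nat.coprime_one_left q') 0
        exact ⟨e, he.ne', hmod, hs⟩
    obtain ⟨e, he, he1, rfl⟩ :=
      realize t List.mem_cons_self (Nat.totient_pos.2 (Nat.pos_of_ne_zero hq)).ne'
    obtain ⟨p, hpN, hp, hpa⟩ := Nat.forall_exists_prime_gt_and_modEq N hq ha
    obtain ⟨m, hm, hm1, hmp, rfl⟩ := exists_primeTowerChildren_eq hq ts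
      (fun s hs => (realize s (List.mem_cons_of_mem _ hs) one_ne_zero).imp
        fun _ ⟨he, _, hs⟩ => ⟨he, hs⟩) p
    refine ⟨p ^ e * m, ?_, ?_, ?_⟩
    · calc N < p := hpN
        _ ≤ p ^ e := Nat.le_self_pow he p
        _ ≤ p ^ e * m := Nat.le_mul_of_pos_right _ (Nat.pos_of_ne_zero hm)
    · calc p ^ e * m ≡ p * 1 [MOD q] :=
            (Nat.pow_modEq_self_of_modEq_one_totient (hpa.gcd_eq.trans ha) he he1).mul hm1
        _ ≡ a [MOD q] := by rwa [mul_one]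
    · rw [primeTower_eq_node, primeTowerChildren_prime_pow_mul hp he hm hmp]

/-- Dirichlet's theorem for trees: for every nontrivial planar rooted tree `t`, every
modulus `q ≥ 1`, and every `a` coprime to `q`, there are infinitely many `n` with
`n ≡ a (mod q)` and `t(n) = t`. -/
theorem stmt_10 (t : PTree) (ht : t ≠ PTree.node []) (q a : ℕ) (hq : 1 ≤ q)
    (ha : Nat.Coprime a q) (N : ℕ) :
    ∃ n : ℕ, N < n ∧ n % q = a % q ∧ primeTower n = t :=
  exists_gt_modEq_primeTower_eq t ht (Nat.one_le_iff_ne_zero.1 hq) ha N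
end

section
/- For all $x \geq 2$ and $k \geq 1$, the number of positive integers $r \leq x$ whose prime-tower tree has height at least $k$ is $O(x / (2 \uparrow\uparrow k))$, with an absolute implied constant. -/
/-- `towerH n` is the height of the prime-tower tree of `n`:
`H(1) = 0` and `H(n) = 1 + max_{p ∣ n} H(ν_p(n))` for `n ≥ 2`. -/
def towerH (n : ℕ) : ℕ :=
  n.primeFactors.attach.sup (fun p => towerH (n.factorization p.1) + 1)
decreasing_by
  exact factorization_lt p.2

/-- Tetration base 2: `tet 0 = 1`, `tet (k+1) = 2 ^ tet k`. -/
def tet : ℕ → ℕ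
  | 0 => 1
  | k + 1 => 2 ^ tet k

/-!
If `H(r) > j` then some prime `p` has `H(ν_p(r)) ≥ j`, and by induction on `j` this forces
`ν_p(r) ≥ 2↑↑j`; so `r` is divisible by `p ^ t` with `t = 2↑↑j`. The number of `r ≤ x` divisible
by some `m ^ t` with `m ≥ 2` is at most `x ∑_{m ≥ 2} m⁻ᵗ ≤ 4x / 2ᵗ = 4x / 2↑↑(j+1)` once `t ≥ 2`,
which is the case for `j ≥ 1`. For `k = 1` the trivial bound `x` suffices.
-/

open Finset

lemma tet_pos (k : ℕ) : 0 < tet k := by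
  cases k with
  | zero => exact Nat.one_pos
  | succ k => exact Nat.two_pow_pos _

lemma two_le_tet {k : ℕ} (hk : 1 ≤ k) : 2 ≤ tet k := by
  obtain ⟨i, rfl⟩ := Nat.exists_eq_add_of_le' hk
  exact Nat.pow_le_pow_right two_pos (tet_pos i)

lemma exists_le_towerH_factorization {n j : ℕ} (h : j < towerH n) :
    ∃ p ∈ n.primeFactors, j ≤ towerH (n.factorization p) := by
  rw [towerH, Finset.lt_sup_iff] at h
  obtain ⟨⟨p, hp⟩, -, hj⟩ := h
  exact ⟨p, hp, Nat.lt_succ_iff.mp hj⟩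

lemma tet_le_of_le_towerH {n j : ℕ} (hn : n ≠ 0) (h : j ≤ towerH n) : tet j ≤ n := by
  induction j generalizing n with
  | zero => exact Nat.one_le_iff_ne_zero.mpr hn
  | succ j ih =>
    obtain ⟨p, hp, hj⟩ := exists_le_towerH_factorization h
    have hν : n.factorization p ≠ 0 := Finsupp.mem_support_iff.mp hp
    have hp := Nat.prime_of_mem_primeFactors hp
    calc tet (j + 1) = 2 ^ tet j := rfl
      _ ≤ p ^ tet j := Nat.pow_le_pow_left hp.two_le _
      _ ≤ p ^ n.factorization p := Nat.pow_le_pow_right hp.pos (ih hν hj)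
      _ ≤ n := Nat.ordProj_le p hn

lemma exists_pow_tet_dvd_of_lt_towerH {r j : ℕ} (h : j < towerH r) :
    ∃ p ∈ r.primeFactors, p ^ tet j ∣ r := by
  obtain ⟨p, hp, hj⟩ := exists_le_towerH_factorization h
  have hν : tet j ≤ r.factorization p :=
    tet_le_of_le_towerH (Finsupp.mem_support_iff.mp hp) hj
  exact ⟨p, hp, (pow_dvd_pow p hν).trans (Nat.ordProj_dvd r p)⟩

lemma card_filter_exists_pow_dvd_le (x t : ℕ) :
    #{r ∈ Icc 1 x | ∃ m ∈ Icc 2 x, m ^ t ∣ r} ≤ ∑ m ∈ Icc 2 x, x / m ^ t := by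
  calc #{r ∈ Icc 1 x | ∃ m ∈ Icc 2 x, m ^ t ∣ r}
      ≤ #((Icc 2 x).biUnion fun m => {r ∈ Icc 1 x | m ^ t ∣ r}) := by
        refine card_le_card fun r hr => ?_
        simp only [mem_filter, mem_biUnion] at hr ⊢
        obtain ⟨hr, m, hm, hdvd⟩ := hr
        exact ⟨m, hm, hr, hdvd⟩
    _ ≤ ∑ m ∈ Icc 2 x, #{r ∈ Icc 1 x | m ^ t ∣ r} := card_biUnion_le
    _ = ∑ m ∈ Icc 2 x, x / m ^ t := by
        rw [show Icc 1 x = Ioc 0 x from Icc_add_one_left_eq_Ioc 0 x]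
        simp only [Nat.Ioc_filter_dvd_card_eq_div]

lemma sum_Icc_inv_pow_le {t : ℕ} (ht : 2 ≤ t) (x : ℕ) :
    ∑ m ∈ Icc 2 x, ((m : ℝ) ^ t)⁻¹ ≤ 4 / 2 ^ t := by
  obtain ⟨s, rfl⟩ := Nat.exists_eq_add_of_le' ht
  have hIcc : Icc 2 x = Ioo 1 (x + 1) := by ext m; simp only [mem_Icc, mem_Ioo]; omega
  calc ∑ m ∈ Icc 2 x, ((m : ℝ) ^ (s + 2))⁻¹
        = ∑ m ∈ Icc 2 x, ((m : ℝ) ^ s)⁻¹ * ((m : ℝ) ^ 2)⁻¹ := by simp only [pow_add, mul_inv]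
    _ ≤ ∑ m ∈ Icc 2 x, ((2 : ℝ) ^ s)⁻¹ * ((m : ℝ) ^ 2)⁻¹ := by
        refine sum_le_sum fun m hm => mul_le_mul_of_nonneg_right ?_ (by positivity)
        have hm : (2 : ℝ) ≤ m := by exact_mod_cast (mem_Icc.mp hm).1
        exact inv_anti₀ (by positivity) (pow_le_pow_left₀ zero_le_two hm s)
    _ = ((2 : ℝ) ^ s)⁻¹ * ∑ m ∈ Ioo 1 (x + 1), ((m : ℝ) ^ 2)⁻¹ := by rw [mul_sum, hIcc]
    _ ≤ ((2 : ℝ) ^ s)⁻¹ * (2 / (1 + 1)) := by gcongr; exact_mod_cast sum_Ioo_inv_sq_le 1 (x + 1)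
    _ = 4 / 2 ^ (s + 2) := by ring

lemma sum_div_pow_le {t : ℕ} (ht : 2 ≤ t) (x : ℕ) :
    ((∑ m ∈ Icc 2 x, x / m ^ t : ℕ) : ℝ) ≤ 4 * x / 2 ^ t := by
  calc ((∑ m ∈ Icc 2 x, x / m ^ t : ℕ) : ℝ)
      ≤ ∑ m ∈ Icc 2 x, (x : ℝ) * ((m : ℝ) ^ t)⁻¹ := by
        push_cast
        refine sum_le_sum fun m _ => ?_
        simpa [div_eq_mul_inv] using (Nat.cast_div_le (α := ℝ) (m := x) (n := m ^ t))
    _ ≤ x * (4 / 2 ^ t) := by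
        rw [← mul_sum]
        exact mul_le_mul_of_nonneg_left (sum_Icc_inv_pow_le ht x) x.cast_nonneg
    _ = 4 * x / 2 ^ t := by ring

lemma card_filter_le_towerH_le {k : ℕ} (hk : 2 ≤ k) (x : ℕ) :
    (#{r ∈ Icc 1 x | k ≤ towerH r} : ℝ) ≤ 4 * x / tet k := by
  obtain ⟨j, rfl⟩ := Nat.exists_eq_add_of_le' (Nat.one_le_of_lt hk)
  have hsub : {r ∈ Icc 1 x | j + 1 ≤ towerH r} ⊆
      {r ∈ Icc 1 x | ∃ m ∈ Icc 2 x, m ^ tet j ∣ r} := by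
    refine monotone_filter_right _ fun r hr hH => ?_
    obtain ⟨p, hp, hdvd⟩ := exists_pow_tet_dvd_of_lt_towerH hH
    exact ⟨p, mem_Icc.mpr ⟨(Nat.prime_of_mem_primeFactors hp).two_le,
      (Nat.le_of_mem_primeFactors hp).trans (mem_Icc.mp hr).2⟩, hdvd⟩
  calc (#{r ∈ Icc 1 x | j + 1 ≤ towerH r} : ℝ)
      ≤ ((∑ m ∈ Icc 2 x, x / m ^ tet j : ℕ) : ℝ) := by
        exact_mod_cast (card_le_card hsub).trans (card_filter_exists_pow_dvd_le x (tet j))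
    _ ≤ 4 * x / 2 ^ tet j := sum_div_pow_le (two_le_tet (by omega)) x
    _ = 4 * x / tet (j + 1) := by simp [tet]

/-- Uniformly in `x ≥ 2` and `k ≥ 1`, `#{r ≤ x : H(r) ≥ k} = O(x / 2↑↑k)`. -/
theorem stmt_12 : ∃ C : ℝ, ∀ x : ℕ, 2 ≤ x → ∀ k : ℕ, 1 ≤ k →
    (((Finset.Icc 1 x).filter (fun r => k ≤ towerH r)).card : ℝ) ≤ C * x / tet k := by
  refine ⟨4, fun x _ k hk => ?_⟩
  rcases hk.eq_or_lt with rfl | hk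
  · have hcard : #{r ∈ Icc 1 x | 1 ≤ towerH r} ≤ x :=
      (card_filter_le _ _).trans (by simp)
    calc (#{r ∈ Icc 1 x | 1 ≤ towerH r} : ℝ) ≤ x := by exact_mod_cast hcard
      _ ≤ 4 * x / tet 1 := by norm_num [tet]; linarith [x.cast_nonneg (α := ℝ)]
  · exact card_filter_le_towerH_le hk x
end
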